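/- arXiv:2605.21808 — 5 statements merged into one kernel-verified Lean document; each statement's English description precedes it below -/
import Mathlib

section
/- Let k be a normalized CNP kernel on 𝔹_d with coefficient family (b_α), and let m and p be positive integers. For every w ∈ 𝔹_d, the function z ↦ k(z,w)^{-m} = (1 − Σ_{α≠0} b_α z^α \overline{w}^α)^m belongs to the reproducing kernel Hilbert space H(k^p). -/
open scoped BigOperators ComplexConjugate

noncomputable section

/-- The open unit ball in `ℂ^d`. -/
def Ball (d : ℕ) : Set (EuclideanSpace ℂ (Fin d)) := Metric.ball 0 1

/-- The monomial `z ^ α` for a multi-index `α`. -/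
def mono {d : ℕ} (z : EuclideanSpace ℂ (Fin d)) (α : Fin d → ℕ) : ℂ :=
  ∏ j, z j ^ α j

/-- Data of a normalized complete Nevanlinna–Pick kernel on the ball `𝔹_d`:
nonnegative coefficients `b α` for multi-indices `α ≠ 0` (we encode the absence
of the `α = 0` term by `b 0 = 0`), `b α = 1` when `|α| = 1`, and
`Σ_{α ≠ 0} b α |z^α|² < 1` for every `z` in the ball. -/
structure CNPData (d : ℕ) where
  b : (Fin d → ℕ) → ℝ
  b_nonneg : ∀ α, 0 ≤ b α
  b_zero : b 0 = 0
  b_one : ∀ α, (∑ j, α j) = 1 → b α = 1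
  summable_diag : ∀ z ∈ Ball d, Summable fun α : Fin d → ℕ => b α * ‖mono z α‖ ^ 2
  sum_lt_one : ∀ z ∈ Ball d, (∑' α : Fin d → ℕ, b α * ‖mono z α‖ ^ 2) < 1

/-- `S z w = Σ_{α ≠ 0} b_α z^α conj (w^α)`. -/
def CNPData.S {d : ℕ} (K : CNPData d) (z w : EuclideanSpace ℂ (Fin d)) : ℂ :=
  ∑' α : Fin d → ℕ, (K.b α : ℂ) * mono z α * conj (mono w α)

/-- The normalized CNP kernel `k(z,w) = (1 - S z w)⁻¹`. -/
def CNPData.k {d : ℕ} (K : CNPData d) (z w : EuclideanSpace ℂ (Fin d)) : ℂ :=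
  (1 - K.S z w)⁻¹

/-!
The kernel `S(z, w) = Σ_α b_α z^α conj (w^α)` is positive semidefinite, as a limit of
nonnegative combinations of rank-one kernels, so by the Schur product theorem every Hadamard
power `S^j` is too. Since `k^(q+1) = Σ_n C(n+q, q) S^n` with all coefficients at least `1`,
each `S^j` is dominated by `k^p` in the Loewner order. A positive kernel `T` dominated by the
Gram kernel of `kf` has its kernel functions in `H`: Cauchy–Schwarz for `T` bounds the
functional `c ↦ Σ_x c_x T(w, x)` by `‖Σ_x c_x kf x‖`, and Hahn–Banach and Riesz turn it
into a vector of `H`. Hence every `S(·, w)^j` lies in `H`, and so does the polynomial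
`(1 - S(·, w))^m = k(·, w)⁻ᵐ`.
-/

open scoped ComplexOrder MatrixOrder InnerProductSpace
open Matrix RCLike

theorem exists_strongDual_comp_eq_of_norm_le {𝕜 M E : Type*} [RCLike 𝕜] [AddCommGroup M]
    [Module 𝕜 M] [SeminormedAddCommGroup E] [NormedSpace 𝕜 E] (π : M →ₗ[𝕜] E)
    (L : M →ₗ[𝕜] 𝕜) (C : ℝ) (hL : ∀ c, ‖L c‖ ≤ C * ‖π c‖) :
    ∃ φ : StrongDual 𝕜 E, ∀ c, φ (π c) = L c := by
  have hker : LinearMap.ker π ≤ LinearMap.ker L := fun c hc ↦ by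
    simpa [LinearMap.mem_ker.mp hc] using hL c
  set L' : LinearMap.range π →ₗ[𝕜] 𝕜 :=
    (LinearMap.ker π).liftQ L hker ∘ₗ π.quotKerEquivRange.symm.toLinearMap
  have hL' : ∀ c, L' (π.rangeRestrict c) = L c := fun c ↦ by
    change (LinearMap.ker π).liftQ L hker (π.quotKerEquivRange.symm ⟨π c, _⟩) = L c
    rw [LinearMap.quotKerEquivRange_symm_apply_image]
    rfl
  have hbound : ∀ v, ‖L' v‖ ≤ C * ‖v‖ := fun v ↦ by
    obtain ⟨c, rfl⟩ := π.surjective_rangeRestrict v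
    exact (hL' c).symm ▸ hL c
  obtain ⟨φ, hφ, -⟩ := exists_extension_norm_eq _ (L'.mkContinuous C hbound)
  exact ⟨φ, fun c ↦ (hφ (π.rangeRestrict c)).trans (hL' c)⟩

theorem Submodule.eval_comp_mem_of_forall_pow_mem {ι R : Type*} [CommSemiring R]
    {V : Submodule R (ι → R)} {φ : ι → R} (hφ : ∀ n : ℕ, φ ^ n ∈ V)
    (P : Polynomial R) :
    (fun x ↦ P.eval (φ x)) ∈ V := by
  induction P using Polynomial.induction_on' with
  | add P Q hP hQ =>
    simp only [Polynomial.eval_add]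
    exact V.add_mem hP hQ
  | monomial n a =>
    convert V.smul_mem a (hφ n) using 1
    ext x
    simp

namespace Matrix

variable {X 𝕜 : Type*} [RCLike 𝕜]

-- `M.PosSemidef` unfolds to `M.IsHermitian ∧ ∀ c, 0 ≤ M.sesqForm c c`.
def sesqForm (M : Matrix X X 𝕜) (c d : X →₀ 𝕜) : 𝕜 :=
  c.sum fun i a ↦ d.sum fun j b ↦ star a * M i j * b

theorem sesqForm_add_left (M : Matrix X X 𝕜) (c c' d : X →₀ 𝕜) :
    M.sesqForm (c + c') d = M.sesqForm c d + M.sesqForm c' d :=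
  Finsupp.sum_add_index' (by simp) fun i a a' ↦ by
    simp only [star_add, add_mul, Finsupp.sum_add]

theorem sesqForm_smul_left (M : Matrix X X 𝕜) (r : 𝕜) (c d : X →₀ 𝕜) :
    M.sesqForm (r • c) d = star r * M.sesqForm c d := by
  rw [sesqForm, Finsupp.sum_smul_index' (by simp), sesqForm, Finsupp.mul_sum]
  simp only [Finsupp.mul_sum, smul_eq_mul, star_mul', mul_assoc]

theorem sesqForm_single_left (M : Matrix X X 𝕜) (w : X) (d : X →₀ 𝕜) :
    M.sesqForm (Finsupp.single w 1) d = d.sum fun j b ↦ M w j * b := by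
  simp [sesqForm, Finsupp.sum_single_index]

theorem sesqForm_sub (M N : Matrix X X 𝕜) (c d : X →₀ 𝕜) :
    (M - N).sesqForm c d = M.sesqForm c d - N.sesqForm c d := by
  simp only [sesqForm, sub_apply, mul_sub, sub_mul, Finsupp.sum_sub]

theorem IsHermitian.star_sesqForm {M : Matrix X X 𝕜} (hM : M.IsHermitian) (c d : X →₀ 𝕜) :
    star (M.sesqForm c d) = M.sesqForm d c := by
  simp only [sesqForm, Finsupp.sum, star_sum]
  rw [Finset.sum_comm]
  refine Finset.sum_congr rfl fun i _ ↦ Finset.sum_congr rfl fun j _ ↦ ?_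
  rw [star_mul', star_mul', star_star, hM.apply]
  ring

theorem sesqForm_gram {E : Type*} [SeminormedAddCommGroup E] [InnerProductSpace 𝕜 E]
    (v : X → E) (c d : X →₀ 𝕜) :
    (gram 𝕜 v).sesqForm c d =
      ⟪Finsupp.linearCombination 𝕜 v c, Finsupp.linearCombination 𝕜 v d⟫_𝕜 := by
  simp only [sesqForm, gram_apply, Finsupp.linearCombination_apply, Finsupp.sum, sum_inner,
    inner_sum, inner_smul_left, inner_smul_right, Finset.mul_sum]
  rw [Finset.sum_comm]
  refine Finset.sum_congr rfl fun i _ ↦ Finset.sum_congr rfl fun j _ ↦ ?_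
  rw [RCLike.star_def]
  ring

theorem PosSemidef.norm_sesqForm_mul_le {M : Matrix X X 𝕜} (hM : M.PosSemidef)
    (c d : X →₀ 𝕜) :
    ‖M.sesqForm c d‖ * ‖M.sesqForm d c‖ ≤ re (M.sesqForm c c) * re (M.sesqForm d d) :=
  InnerProductSpace.Core.inner_mul_inner_self_le (c :=
    { inner := M.sesqForm
      conj_inner_symm c d := hM.isHermitian.star_sesqForm d c
      re_inner_nonneg c := (RCLike.nonneg_iff.mp (hM.2 c)).1
      add_left := M.sesqForm_add_left
      smul_left c d r := M.sesqForm_smul_left r c d }) c d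

theorem PosSemidef.norm_apply_sq_le {M : Matrix X X 𝕜} (hM : M.PosSemidef) (i j : X) :
    ‖M i j‖ ^ 2 ≤ re (M i i) * re (M j j) := by
  simpa [sq, sesqForm_single_left, ← hM.isHermitian.apply i j] using
    hM.norm_sesqForm_mul_le (Finsupp.single i 1) (Finsupp.single j 1)

theorem re_sesqForm_le_of_le {M N : Matrix X X 𝕜} (hMN : M ≤ N) (c : X →₀ 𝕜) :
    re (M.sesqForm c c) ≤ re (N.sesqForm c c) := by
  have h := (RCLike.nonneg_iff.mp ((le_iff.mp hMN).2 c)).1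
  rwa [← sesqForm, sesqForm_sub, map_sub, sub_nonneg] at h

theorem posSemidef_vecMulVec_self_star' (a : X → 𝕜) : (vecMulVec a (star a)).PosSemidef := by
  refine ⟨IsHermitian.ext fun i j ↦ by simp [vecMulVec_apply, mul_comm], fun x ↦ ?_⟩
  convert star_mul_self_nonneg (x.sum fun j b ↦ star (a j) * b) using 1
  simp only [Finsupp.sum, star_sum, Finset.sum_mul, Finset.mul_sum, vecMulVec_apply, star_mul',
    star_star, Pi.star_apply]
  rw [Finset.sum_comm]
  exact Finset.sum_congr rfl fun i _ ↦ Finset.sum_congr rfl fun j _ ↦ by ring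

theorem PosSemidef.of_hasSum {ι : Type*} {M : ι → Matrix X X 𝕜} {T : Matrix X X 𝕜}
    (hM : ∀ n, (M n).PosSemidef) (hT : ∀ i j, HasSum (fun n ↦ M n i j) (T i j)) :
    T.PosSemidef := by
  refine ⟨IsHermitian.ext fun i j ↦ ?_, fun x ↦ ?_⟩
  · have h := hT i j
    simp only [← (hM _).isHermitian.apply i j] at h
    exact (hT j i).star.unique h
  · have h : HasSum (fun n ↦ (M n).sesqForm x x) (T.sesqForm x x) :=
      hasSum_sum fun i _ ↦ hasSum_sum fun j _ ↦ ((hT i j).mul_left (star (x i))).mul_right (x j)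
    exact h.nonneg fun n ↦ (hM n).2 x

theorem PosSemidef.hadamard_pow {A : Matrix X X 𝕜} (hA : A.PosSemidef) (n : ℕ) :
    (of fun i j ↦ A i j ^ n).PosSemidef := by
  induction n with
  | zero => simpa [vecMulVec] using posSemidef_vecMulVec_self_star' (fun _ : X ↦ (1 : 𝕜))
  | succ n ih =>
    convert ih.hadamard hA using 1
    ext i j
    simp [pow_succ]

section GramDomination

variable {E : Type*} [NormedAddCommGroup E] [InnerProductSpace 𝕜 E]

theorem PosSemidef.norm_sum_mul_le_of_le_gram {T : Matrix X X 𝕜} (hT : T.PosSemidef)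
    {v : X → E} (hTv : T ≤ gram 𝕜 v) (w : X) (c : X →₀ 𝕜) :
    ‖c.sum fun x a ↦ T w x * a‖ ≤
      √(re (T w w)) * ‖Finsupp.linearCombination 𝕜 v c‖ := by
  set δ : X →₀ 𝕜 := Finsupp.single w 1
  have hδδ : T.sesqForm δ δ = T w w := by simp [δ, sesqForm_single_left]
  have hw : 0 ≤ re (T w w) := (RCLike.nonneg_iff.mp hT.diag_nonneg).1
  rw [← sesqForm_single_left, ← Real.sqrt_sq (norm_nonneg (Finsupp.linearCombination 𝕜 v c)),
    ← Real.sqrt_mul hw, Real.le_sqrt (norm_nonneg _) (by positivity)]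
  calc ‖T.sesqForm δ c‖ ^ 2 = ‖T.sesqForm δ c‖ * ‖T.sesqForm c δ‖ := by
        rw [sq, ← hT.isHermitian.star_sesqForm, norm_star]
    _ ≤ re (T.sesqForm δ δ) * re (T.sesqForm c c) := hT.norm_sesqForm_mul_le δ c
    _ ≤ re (T w w) * re ((gram 𝕜 v).sesqForm c c) := by
        rw [hδδ]
        exact mul_le_mul_of_nonneg_left (re_sesqForm_le_of_le hTv c) hw
    _ = re (T w w) * ‖Finsupp.linearCombination 𝕜 v c‖ ^ 2 := by
        rw [sesqForm_gram, inner_self_eq_norm_sq]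

theorem PosSemidef.exists_inner_eq_of_le_gram [CompleteSpace E] {T : Matrix X X 𝕜}
    (hT : T.PosSemidef) {v : X → E} (hTv : T ≤ gram 𝕜 v) (w : X) :
    ∃ g : E, ∀ x, ⟪v x, g⟫_𝕜 = T x w := by
  obtain ⟨φ, hφ⟩ := exists_strongDual_comp_eq_of_norm_le (Finsupp.linearCombination 𝕜 v)
    (Finsupp.linearCombination 𝕜 (T w)) _ fun c ↦ by
      simpa [Finsupp.linearCombination_apply, mul_comm] using
        hT.norm_sum_mul_le_of_le_gram hTv w c
  refine ⟨(InnerProductSpace.toDual 𝕜 E).symm φ, fun x ↦ ?_⟩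
  have hx := hφ (Finsupp.single x 1)
  simp only [Finsupp.linearCombination_single, one_smul] at hx
  rw [← inner_conj_symm, InnerProductSpace.toDual_symm_apply, hx, ← hT.isHermitian.apply x w,
    RCLike.star_def]

end GramDomination

end Matrix

namespace CNPData

variable {d : ℕ} (K : CNPData d)

theorem summable_term {z w : EuclideanSpace ℂ (Fin d)} (hz : z ∈ Ball d) (hw : w ∈ Ball d) :
    Summable fun α ↦ (K.b α : ℂ) * mono z α * conj (mono w α) := by
  refine .of_norm_bounded (((K.summable_diag z hz).add (K.summable_diag w hw)).div_const 2)
    fun α ↦ ?_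
  have hb := K.b_nonneg α
  simp only [norm_mul, Complex.norm_real, Real.norm_of_nonneg hb, RCLike.norm_conj]
  nlinarith [two_mul_le_add_sq ‖mono z α‖ ‖mono w α‖]

def sMatrix : Matrix (Ball d) (Ball d) ℂ :=
  Matrix.of fun z w ↦ K.S z w

theorem posSemidef_sMatrix : K.sMatrix.PosSemidef := by
  set u : (Fin d → ℕ) → Ball d → ℂ := fun α z ↦ mono z α
  refine Matrix.PosSemidef.of_hasSum (M := fun α ↦ K.b α • vecMulVec (u α) (star (u α)))
    (fun α ↦ (posSemidef_vecMulVec_self_star' _).smul (K.b_nonneg α)) fun z w ↦ ?_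
  simpa [u, sMatrix, CNPData.S, vecMulVec_apply, mul_assoc] using
    (K.summable_term z.2 w.2).hasSum

theorem S_self (z : EuclideanSpace ℂ (Fin d)) :
    K.S z z = ((∑' α, K.b α * ‖mono z α‖ ^ 2 : ℝ) : ℂ) := by
  rw [CNPData.S, Complex.ofReal_tsum]
  congr 1 with α
  rw [mul_assoc, Complex.mul_conj']
  push_cast
  ring

theorem norm_S_lt_one {z w : EuclideanSpace ℂ (Fin d)} (hz : z ∈ Ball d) (hw : w ∈ Ball d) :
    ‖K.S z w‖ < 1 := by
  have h := K.posSemidef_sMatrix.norm_apply_sq_le ⟨z, hz⟩ ⟨w, hw⟩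
  simp only [sMatrix, of_apply, S_self, RCLike.re_to_complex, Complex.ofReal_re] at h
  have hz₀ : 0 ≤ ∑' α, K.b α * ‖mono z α‖ ^ 2 := tsum_nonneg fun α ↦ by
    have := K.b_nonneg α; positivity
  have hw₀ : 0 ≤ ∑' α, K.b α * ‖mono w α‖ ^ 2 := tsum_nonneg fun α ↦ by
    have := K.b_nonneg α; positivity
  nlinarith [K.sum_lt_one z hz, K.sum_lt_one w hw, norm_nonneg (K.S z w)]

theorem hasSum_k_pow (q : ℕ) {z w : EuclideanSpace ℂ (Fin d)} (hz : z ∈ Ball d)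
    (hw : w ∈ Ball d) :
    HasSum (fun n ↦ ((n + q).choose q : ℂ) * K.S z w ^ n) (K.k z w ^ (q + 1)) := by
  simpa [CNPData.k] using hasSum_choose_mul_geometric_of_norm_lt_one q (K.norm_S_lt_one hz hw)

theorem hadamard_pow_sMatrix_le (q j : ℕ) :
    (of fun z w ↦ K.sMatrix z w ^ j) ≤ of fun z w : Ball d ↦ K.k z w ^ (q + 1) := by
  refine Matrix.le_iff.mpr <| Matrix.PosSemidef.of_hasSum
    (M := fun n ↦ (((n + q).choose q : ℝ) - if n = j then 1 else 0) •
      of fun z w ↦ K.sMatrix z w ^ n)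
    (fun n ↦ (K.posSemidef_sMatrix.hadamard_pow n).smul ?_) fun z w ↦ ?_
  · have : (1 : ℝ) ≤ (n + q).choose q := by exact_mod_cast Nat.choose_pos (by omega)
    split_ifs <;> linarith
  · simp only [Matrix.sub_apply, Matrix.smul_apply, of_apply, sMatrix]
    convert (K.hasSum_k_pow q z.2 w.2).sub (hasSum_ite_eq j (K.S z w ^ j)) using 1
    · rfl
    ext n
    split_ifs with hn
    · simp [hn, Complex.real_smul, sub_mul]
    · simp [Complex.real_smul]

end CNPData

theorem stmt0_general (d m p : ℕ) (hp : 0 < p) (K : CNPData d)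
    {H : Type} [NormedAddCommGroup H] [InnerProductSpace ℂ H] [CompleteSpace H]
    (J : H →ₗ[ℂ] (Ball d → ℂ))
    (kf : Ball d → H)
    (hkf : ∀ w : Ball d, J (kf w) = fun z : Ball d => K.k ↑z ↑w ^ p)
    (hrep : ∀ (f : H) (w : Ball d), J f w = inner ℂ (kf w) f)
    (w : Ball d) :
    ∃ g : H, J g = fun z : Ball d => (K.k ↑z ↑w)⁻¹ ^ m := by
  have hgram : gram ℂ kf = of fun z w : Ball d ↦ K.k z w ^ p := by
    ext z w
    rw [gram_apply, ← hrep, hkf, of_apply]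
  obtain ⟨q, rfl⟩ : ∃ q, p = q + 1 := ⟨p - 1, by omega⟩
  have hpow : ∀ j : ℕ, (fun z : Ball d ↦ K.S z w) ^ j ∈ LinearMap.range J := fun j ↦ by
    obtain ⟨g, hg⟩ := (K.posSemidef_sMatrix.hadamard_pow j).exists_inner_eq_of_le_gram
      (hgram ▸ K.hadamard_pow_sMatrix_le q j) w
    exact ⟨g, funext fun z ↦ (hrep g z).trans (hg z)⟩
  obtain ⟨g, hg⟩ := Submodule.eval_comp_mem_of_forall_pow_mem hpow ((1 - Polynomial.X) ^ m)
  exact ⟨g, by simpa [CNPData.k] using hg⟩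

/-- for a normalized CNP kernel `k` on `𝔹_d` and positive integers `m, p`,
the function `z ↦ k(z,w)⁻ᵐ` belongs to the RKHS `H(k^p)`.  The RKHS is axiomatized by a
Hilbert space `H` with an injective linear point-evaluation map `J`, kernel elements `kf w`
representing `k(·,w)^p`, and the reproducing property. -/
theorem stmt0 (d m p : ℕ) (hd : 0 < d) (hm : 0 < m) (hp : 0 < p) (K : CNPData d)
    {H : Type} [NormedAddCommGroup H] [InnerProductSpace ℂ H] [CompleteSpace H]
    (J : H →ₗ[ℂ] (Ball d → ℂ)) (hJ : Function.Injective J)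
    (kf : Ball d → H)
    (hkf : ∀ w : Ball d, J (kf w) = fun z : Ball d => K.k ↑z ↑w ^ p)
    (hrep : ∀ (f : H) (w : Ball d), J f w = inner ℂ (kf w) f)
    (w : Ball d) :
    ∃ g : H, J g = fun z : Ball d => (K.k ↑z ↑w)⁻¹ ^ m :=
  stmt0_general d m p hp K J kf hkf hrep w
end
end

section
/- Let k be a normalized CNP kernel on 𝔹_d with coefficient family (b_α) and let p be a positive integer. For every w ∈ 𝔹_d, the function φ_w(z) = k(z,w)^{-1} = 1 − Σ_{α≠0} b_α z^α \overline{w}^α is a multiplier of H(k^p): for every f ∈ H(k^p) the pointwise product φ_w · f belongs to H(k^p). Likewise, the function ψ_w(z) = Σ_{α≠0} b_α z^α \overline{w}^α is a multiplier of H(k^p). -/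
open scoped BigOperators ComplexConjugate

noncomputable section

/-!
`S z z'` is the Gram matrix of the ℓ² vectors `F z = (√b_α · conj z^α)_α`, which have norm `< 1`,
so `k = ∑ₙ Sⁿ` and all its Schur powers are positive semidefinite. For `ψ = S(·, w)`,
`(1 - ψ z · conj ψ z') k^p = k^(p-1) + (S - ψ ψ*) k^p`, and `S - ψ ψ*` is positive by
Cauchy–Schwarz since `‖F w‖ ≤ 1`. Positivity of `(1 - ψ ψ*) k^p` says exactly that
`k^p(·, z) ↦ conj (ψ z) • k^p(·, z)` extends to a contraction `T` of `H(k^p)`, and then `T*` is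
multiplication by `ψ`. Finally `φ_w = 1 - ψ_w`.
-/

open scoped ComplexOrder InnerProductSpace

namespace Matrix

variable {n 𝕜 E : Type*} [RCLike 𝕜] [NormedAddCommGroup E] [InnerProductSpace 𝕜 E]

theorem inner_linearCombination_self (v : n → E) (c : n →₀ 𝕜) :
    ⟪Finsupp.linearCombination 𝕜 v c, Finsupp.linearCombination 𝕜 v c⟫_𝕜 =
      c.sum fun i ci ↦ c.sum fun j cj ↦ star ci * gram 𝕜 v i j * cj := by
  simp only [Finsupp.linearCombination_apply, Finsupp.sum, sum_inner, inner_sum, inner_smul_left,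
    inner_smul_right, gram_apply, RCLike.star_def, Finset.mul_sum]
  exact Finset.sum_comm.trans <|
    Finset.sum_congr rfl fun i _ ↦ Finset.sum_congr rfl fun j _ ↦ by ring

theorem posSemidef_gram' (v : n → E) : (gram 𝕜 v).PosSemidef := by
  refine ⟨isHermitian_gram 𝕜 v, fun c ↦ ?_⟩
  rw [← inner_linearCombination_self, inner_self_eq_norm_sq_to_K]
  positivity

theorem posSemidef_gram_sub_vecMulVec (v : n → E) {e : E} (he : ‖e‖ ≤ 1) :
    (gram 𝕜 v - vecMulVec (fun i ↦ ⟪v i, e⟫_𝕜) (fun j ↦ ⟪e, v j⟫_𝕜)).PosSemidef := by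
  refine ⟨?_, fun c ↦ ?_⟩
  · refine (isHermitian_gram 𝕜 v).sub ?_
    rw [IsHermitian, conjTranspose_vecMulVec]
    congr 1 <;> ext i <;> simp
  set y := Finsupp.linearCombination 𝕜 v c
  have hquad : (c.sum fun i ci ↦ c.sum fun j cj ↦
      star ci * vecMulVec (fun i ↦ ⟪v i, e⟫_𝕜) (fun j ↦ ⟪e, v j⟫_𝕜) i j * cj) =
      ⟪y, e⟫_𝕜 * ⟪e, y⟫_𝕜 := by
    simp only [y, Finsupp.linearCombination_apply, Finsupp.sum, sum_inner, inner_sum,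
      inner_smul_left, inner_smul_right, vecMulVec_apply, RCLike.star_def, Finset.sum_mul,
      Finset.mul_sum]
    exact Finset.sum_comm.trans <|
      Finset.sum_congr rfl fun i _ ↦ Finset.sum_congr rfl fun j _ ↦ by ring
  have hcs : ‖⟪y, e⟫_𝕜‖ ≤ ‖y‖ :=
    (norm_inner_le_norm y e).trans (mul_le_of_le_one_right (norm_nonneg y) he)
  simp only [sub_apply, mul_sub, sub_mul, Finsupp.sum_sub, ← inner_linearCombination_self, hquad]
  rw [← inner_conj_symm e y, RCLike.mul_conj, inner_self_eq_norm_sq_to_K, sub_nonneg]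
  exact_mod_cast pow_le_pow_left₀ (norm_nonneg _) hcs 2

theorem PosSemidef.map_pow {A : Matrix n n 𝕜} (hA : A.PosSemidef) (m : ℕ) :
    (A.map (· ^ m)).PosSemidef := by
  induction m with
  | zero =>
    convert posSemidef_gram' (𝕜 := 𝕜) fun _ : n ↦ (1 : 𝕜)
    ext; simp
  | succ m ih =>
    convert ih.hadamard hA using 1
    ext; simp [pow_succ]

theorem posSemidef_of_tsum {ι : Type*} {A : ι → Matrix n n 𝕜} (hA : ∀ k, (A k).PosSemidef)
    (hsum : ∀ i j, Summable fun k ↦ A k i j) :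
    (of fun i j ↦ ∑' k, A k i j).PosSemidef := by
  refine ⟨?_, fun c ↦ ?_⟩
  · ext i j
    simp only [conjTranspose_apply, of_apply, tsum_star]
    exact tsum_congr fun k ↦ (hA k).isHermitian.apply i j
  have hterm : ∀ i j, Summable fun k ↦ star (c i) * A k i j * c j := fun i j ↦
    ((hsum i j).mul_left _).mul_right _
  have hexp : (c.sum fun i ci ↦ c.sum fun j cj ↦ star ci * of (fun i j ↦ ∑' k, A k i j) i j * cj)
      = ∑' k, c.sum fun i ci ↦ c.sum fun j cj ↦ star ci * A k i j * cj := by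
    simp only [of_apply, Finsupp.sum, ← tsum_mul_left, ← tsum_mul_right]
    rw [Summable.tsum_finsetSum fun i _ ↦ summable_sum fun j _ ↦ hterm i j]
    exact Finset.sum_congr rfl fun i _ ↦ (Summable.tsum_finsetSum fun j _ ↦ hterm i j).symm
  rw [hexp]
  exact tsum_nonneg fun k ↦ (hA k).2 c

theorem norm_linearCombination_le_of_posSemidef_gram_sub {F : Type*} [NormedAddCommGroup F]
    [InnerProductSpace 𝕜 F] {u : n → E} {v : n → F}
    (h : (gram 𝕜 u - gram 𝕜 v).PosSemidef) (c : n →₀ 𝕜) :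
    ‖Finsupp.linearCombination 𝕜 v c‖ ≤ ‖Finsupp.linearCombination 𝕜 u c‖ := by
  have hc := h.2 c
  simp only [sub_apply, mul_sub, sub_mul, Finsupp.sum_sub, ← inner_linearCombination_self,
    inner_self_eq_norm_sq_to_K, sub_nonneg] at hc
  exact (pow_le_pow_iff_left₀ (norm_nonneg _) (norm_nonneg _) two_ne_zero).mp (by exact_mod_cast hc)

end Matrix

section Multiplier

open Matrix

variable {𝕜 X H : Type*} [RCLike 𝕜] [NormedAddCommGroup H] [InnerProductSpace 𝕜 H]

theorem exists_continuousLinearMap_apply_eq_of_posSemidef_gram_sub {F : Type*}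
    [NormedAddCommGroup F] [InnerProductSpace 𝕜 F] [CompleteSpace F] {u : X → H} {v : X → F}
    (hu : DenseRange (Finsupp.linearCombination 𝕜 u)) (h : (gram 𝕜 u - gram 𝕜 v).PosSemidef) :
    ∃ T : H →L[𝕜] F, ∀ x, T (u x) = v x := by
  have hbound (c : X →₀ 𝕜) :
      ‖Finsupp.linearCombination 𝕜 v c‖ ≤ 1 * ‖Finsupp.linearCombination 𝕜 u c‖ := by
    rw [one_mul]
    exact norm_linearCombination_le_of_posSemidef_gram_sub h c
  refine ⟨(Finsupp.linearCombination 𝕜 v).extendOfNorm (Finsupp.linearCombination 𝕜 u),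
    fun x ↦ ?_⟩
  simpa only [Finsupp.linearCombination_single, one_smul] using
    LinearMap.extendOfNorm_eq (f := Finsupp.linearCombination 𝕜 v)
      (e := Finsupp.linearCombination 𝕜 u) hu ⟨1, hbound⟩ (Finsupp.single x 1)

variable [CompleteSpace H] {J : H →ₗ[𝕜] X → 𝕜} {kf : X → H}

theorem denseRange_linearCombination_of_reproducing (hJ : Function.Injective J)
    (hrep : ∀ f x, J f x = ⟪kf x, f⟫_𝕜) : DenseRange (Finsupp.linearCombination 𝕜 kf) := by
  rw [DenseRange, ← LinearMap.coe_range, Finsupp.range_linearCombination,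
    Submodule.dense_iff_topologicalClosure_eq_top, Submodule.topologicalClosure_eq_top_iff,
    Submodule.eq_bot_iff]
  intro u hu
  refine hJ ((map_zero J).symm ▸ funext fun x ↦ ?_)
  rw [hrep]
  exact Submodule.inner_right_of_mem_orthogonal (Submodule.subset_span (Set.mem_range_self x)) hu

theorem exists_eq_mul_of_posSemidef (hJ : Function.Injective J) (hrep : ∀ f x, J f x = ⟪kf x, f⟫_𝕜)
    (ψ : X → 𝕜) (hψ : (of fun x y ↦ (1 - ψ x * conj (ψ y)) * ⟪kf x, kf y⟫_𝕜).PosSemidef)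
    (f : H) : ∃ g : H, J g = fun x ↦ ψ x * J f x := by
  have hgram : gram 𝕜 kf - gram 𝕜 (fun x ↦ conj (ψ x) • kf x) =
      of fun x y ↦ (1 - ψ x * conj (ψ y)) * ⟪kf x, kf y⟫_𝕜 := by
    ext x y
    simp only [Matrix.sub_apply, gram_apply, of_apply, inner_smul_left, inner_smul_right,
      RCLike.conj_conj]
    ring
  obtain ⟨T, hT⟩ := exists_continuousLinearMap_apply_eq_of_posSemidef_gram_sub
    (denseRange_linearCombination_of_reproducing hJ hrep) (hgram ▸ hψ)
  refine ⟨T.adjoint f, funext fun x ↦ ?_⟩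
  rw [hrep, ContinuousLinearMap.adjoint_inner_right, hT, inner_smul_left, RCLike.conj_conj, hrep]

end Multiplier

namespace CNPData

open Matrix

variable {d : ℕ} (K : CNPData d)

/-- Conjugating `z^α` makes `⟪F z, F z'⟫` equal to `S z z'` rather than to its conjugate. -/
def feature (z : EuclideanSpace ℂ (Fin d)) (α : Fin d → ℕ) : ℂ :=
  Real.sqrt (K.b α) * conj (mono z α)

theorem norm_feature_sq (z : EuclideanSpace ℂ (Fin d)) (α : Fin d → ℕ) :
    ‖K.feature z α‖ ^ 2 = K.b α * ‖mono z α‖ ^ 2 := by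
  rw [feature, norm_mul, mul_pow, Complex.norm_real, Real.norm_eq_abs, sq_abs,
    Real.sq_sqrt (K.b_nonneg α), Complex.norm_conj]

theorem memℓp_feature {z : EuclideanSpace ℂ (Fin d)} (hz : z ∈ Ball d) :
    Memℓp (K.feature z) 2 :=
  memℓp_gen <| (K.summable_diag z hz).congr fun α ↦ by
    rw [ENNReal.toReal_ofNat, Real.rpow_two, norm_feature_sq]

def featureVec (z : Ball d) : lp (fun _ : Fin d → ℕ ↦ ℂ) 2 :=
  ⟨K.feature z, K.memℓp_feature z.2⟩

theorem inner_featureVec (z z' : Ball d) :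
    ⟪K.featureVec z, K.featureVec z'⟫_ℂ = K.S z z' := by
  rw [lp.inner_eq_tsum, CNPData.S]
  refine tsum_congr fun α ↦ ?_
  have hb : (Real.sqrt (K.b α) : ℂ) * Real.sqrt (K.b α) = K.b α := by
    rw [← Complex.ofReal_mul, Real.mul_self_sqrt (K.b_nonneg α)]
  simp only [featureVec, feature, RCLike.inner_apply, map_mul, Complex.conj_ofReal,
    Complex.conj_conj, ← hb]
  ring

theorem norm_featureVec_lt_one (z : Ball d) : ‖K.featureVec z‖ < 1 := by
  have hsq : ‖K.featureVec z‖ ^ 2 = ∑' α, K.b α * ‖mono z α‖ ^ 2 := by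
    have := lp.norm_rpow_eq_tsum (p := 2) (by norm_num) (K.featureVec z)
    simp only [ENNReal.toReal_ofNat, Real.rpow_two] at this
    exact this.trans (tsum_congr fun α ↦ K.norm_feature_sq z α)
  exact (sq_lt_one_iff₀ (norm_nonneg _)).mp (hsq ▸ K.sum_lt_one z z.2)

theorem norm_S_lt_one_s1 (z z' : Ball d) : ‖K.S z z'‖ < 1 := by
  rw [← inner_featureVec]
  exact (norm_inner_le_norm _ _).trans_lt <| mul_lt_one_of_nonneg_of_lt_one_left (norm_nonneg _)
    (K.norm_featureVec_lt_one z) (K.norm_featureVec_lt_one z').le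

theorem conj_S (z z' : Ball d) : conj (K.S z z') = K.S z' z := by
  rw [← inner_featureVec, ← inner_featureVec, inner_conj_symm]

theorem k_eq_tsum_S_pow (z z' : Ball d) : K.k z z' = ∑' n : ℕ, K.S z z' ^ n :=
  (tsum_geometric_of_norm_lt_one (K.norm_S_lt_one_s1 z z')).symm

theorem one_sub_S_mul_k_pow {p : ℕ} (hp : 0 < p) (z z' : Ball d) :
    (1 - K.S z z') * K.k z z' ^ p = K.k z z' ^ (p - 1) := by
  have hS : 1 - K.S z z' ≠ 0 := fun h ↦ by
    simpa [← sub_eq_zero.mp h] using K.norm_S_lt_one_s1 z z'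
  obtain ⟨q, rfl⟩ := Nat.exists_eq_succ_of_ne_zero hp.ne'
  rw [k, Nat.succ_sub_one, pow_succ', ← mul_assoc, mul_inv_cancel₀ hS, one_mul]

theorem posSemidef_k : (of fun z z' : Ball d ↦ K.k z z').PosSemidef := by
  have hk : (of fun z z' : Ball d ↦ K.k z z') =
      of fun z z' ↦ ∑' n : ℕ, (gram ℂ K.featureVec).map (· ^ n) z z' := by
    ext z z'
    simp [inner_featureVec, k_eq_tsum_S_pow]
  rw [hk]
  exact posSemidef_of_tsum (fun n ↦ (posSemidef_gram' _).map_pow n) fun z z' ↦ by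
    simpa [inner_featureVec] using summable_geometric_of_norm_lt_one (K.norm_S_lt_one_s1 z z')

theorem posSemidef_one_sub_S_mul_k_pow {p : ℕ} (hp : 0 < p) (w : Ball d) :
    (of fun z z' : Ball d ↦ (1 - K.S z w * conj (K.S z' w)) * K.k z z' ^ p).PosSemidef := by
  have hsplit : (of fun z z' : Ball d ↦ (1 - K.S z w * conj (K.S z' w)) * K.k z z' ^ p) =
      (of fun z z' : Ball d ↦ K.k z z').map (· ^ (p - 1)) +
        (gram ℂ K.featureVec - vecMulVec (fun z ↦ ⟪K.featureVec z, K.featureVec w⟫_ℂ)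
          (fun z' ↦ ⟪K.featureVec w, K.featureVec z'⟫_ℂ)) ⊙
          (of fun z z' : Ball d ↦ K.k z z').map (· ^ p) := by
    ext z z'
    simp only [of_apply, Matrix.add_apply, map_apply, hadamard_apply, Matrix.sub_apply, gram_apply,
      vecMulVec_apply, inner_featureVec, ← K.conj_S z' w]
    rw [← K.one_sub_S_mul_k_pow hp]
    ring
  rw [hsplit]
  exact (K.posSemidef_k.map_pow _).add <|
    (posSemidef_gram_sub_vecMulVec _ (K.norm_featureVec_lt_one w).le).hadamard
      (K.posSemidef_k.map_pow p)

end CNPData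

theorem stmt1_general (d p : ℕ) (hp : 0 < p) (K : CNPData d)
    {H : Type} [NormedAddCommGroup H] [InnerProductSpace ℂ H] [CompleteSpace H]
    (J : H →ₗ[ℂ] (Ball d → ℂ)) (hJ : Function.Injective J)
    (kf : Ball d → H)
    (hkf : ∀ w : Ball d, J (kf w) = fun z : Ball d => K.k ↑z ↑w ^ p)
    (hrep : ∀ (f : H) (w : Ball d), J f w = inner ℂ (kf w) f)
    (w : Ball d) :
    (∀ f : H, ∃ g : H, J g = fun z : Ball d => (K.k ↑z ↑w)⁻¹ * J f z) ∧
    (∀ f : H, ∃ g : H, J g = fun z : Ball d => K.S ↑z ↑w * J f z) := by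
  have hgram (z z' : Ball d) : ⟪kf z, kf z'⟫_ℂ = K.k z z' ^ p := by
    rw [← hrep, hkf]
  have hS (f : H) : ∃ g : H, J g = fun z : Ball d => K.S z w * J f z :=
    exists_eq_mul_of_posSemidef hJ hrep _
      (by simpa only [hgram] using K.posSemidef_one_sub_S_mul_k_pow hp w) f
  refine ⟨fun f ↦ ?_, hS⟩
  obtain ⟨g, hg⟩ := hS f
  refine ⟨f - g, funext fun z ↦ ?_⟩
  simp only [map_sub, Pi.sub_apply, hg, CNPData.k, inv_inv]
  ring

/-- for every `w ∈ 𝔹_d`, the functions `φ_w = k(·,w)⁻¹` and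
`ψ_w(z) = Σ_{α≠0} b_α z^α conj(w^α)` are multipliers of `H(k^p)`: multiplying any
member of `H(k^p)` pointwise by them lands back in `H(k^p)`. -/
theorem stmt1 (d p : ℕ) (hd : 0 < d) (hp : 0 < p) (K : CNPData d)
    {H : Type} [NormedAddCommGroup H] [InnerProductSpace ℂ H] [CompleteSpace H]
    (J : H →ₗ[ℂ] (Ball d → ℂ)) (hJ : Function.Injective J)
    (kf : Ball d → H)
    (hkf : ∀ w : Ball d, J (kf w) = fun z : Ball d => K.k ↑z ↑w ^ p)
    (hrep : ∀ (f : H) (w : Ball d), J f w = inner ℂ (kf w) f)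
    (w : Ball d) :
    (∀ f : H, ∃ g : H, J g = fun z : Ball d => (K.k ↑z ↑w)⁻¹ * J f z) ∧
    (∀ f : H, ∃ g : H, J g = fun z : Ball d => K.S ↑z ↑w * J f z) :=
  stmt1_general d p hp K J hJ kf hkf hrep w
end
end

section
/- Let d and p be positive integers, let b : ℤ₊^d∖{0} → ℝ_{≥0} satisfy b_γ = 1 whenever |γ| = 1, and let μ : ℤ₊^d → ℂ satisfy μ(0) = 1. Suppose that for every nonzero α ∈ ℤ₊^d, Σ_{r=1}^{|α|} C(r+p−1, p−1) Σ_{(γ₁,…,γ_r)} (∏_{i=1}^r b_{γ_i}) (∏_{i=1}^r μ(γ_i)) = ( Σ_{r=1}^{|α|} C(r+p−1, p−1) Σ_{(γ₁,…,γ_r)} ∏_{i=1}^r b_{γ_i} ) · μ(α), where the inner sums run over ordered r-tuples of nonzero multi-indices (γ₁,…,γ_r) with γ₁+⋯+γ_r = α and C(·,·) denotes the binomial coefficient. Then μ(α) = ∏_{j=1}^d μ(e_j)^{α_j} for every α ∈ ℤ₊^d, where e_j is the j-th standard unit multi-index. -/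
open scoped BigOperators Classical

noncomputable section

/-- The (finite) set of ordered `r`-tuples `(γ₁, …, γ_r)` of *nonzero* multi-indices in
`ℤ₊^d` with `γ₁ + ⋯ + γ_r = α`. -/
def comps (d r : ℕ) (α : Fin d → ℕ) : Finset (Fin r → (Fin d → ℕ)) :=
  (Fintype.piFinset fun _ : Fin r => Finset.Iic α).filter
    fun γ => (∑ i, γ i) = α ∧ ∀ i, γ i ≠ 0

/-!
Strong induction on `|α|`. For `|α| ≥ 2`, every part of a composition of `α` into `r ≥ 2`
nonzero multi-indices is smaller than `α`, so by induction `∏ μ(γᵢ) = ∏ⱼ μ(e_j)^{α_j}` for all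
those terms. The `r = 1` terms of both sides coincide, so the hypothesis at `α` reduces to
`T · ∏ⱼ μ(e_j)^{α_j} = T · μ(α)`, where `T` is the total `b`-weight of the compositions with at
least two parts. `T > 0`: all weights are nonnegative and the composition of `α` into `|α|`
unit multi-indices has weight `1`.
-/

open Finset

lemma prod_pow_sum_apply {ι κ M : Type*} [Fintype ι] [Fintype κ] [CommMonoid M]
    (x : κ → M) (γ : ι → κ → ℕ) : ∏ j, x j ^ (∑ i, γ i) j = ∏ i, ∏ j, x j ^ γ i j := by
  rw [prod_comm]
  exact prod_congr rfl fun j _ => by rw [Finset.sum_apply, prod_pow_eq_pow_sum]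

lemma sum_sum_apply {ι κ M : Type*} [Fintype ι] [Fintype κ] [AddCommMonoid M] (γ : ι → κ → M) :
    ∑ j, (∑ i, γ i) j = ∑ i, ∑ j, γ i j := by
  simp only [Finset.sum_apply]
  exact sum_comm

section Compositions

variable {d r : ℕ} {α : Fin d → ℕ}

lemma exists_eq_add_single (hα : α ≠ 0) :
    ∃ (α' : Fin d → ℕ) (j : Fin d), α = α' + Pi.single j 1 := by
  obtain ⟨j, hj⟩ := Function.ne_iff.mp hα
  refine ⟨α - Pi.single j 1, j, (tsub_add_cancel_of_le fun k => ?_).symm⟩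
  by_cases hk : k = j
  · subst hk
    simpa using Nat.one_le_iff_ne_zero.mpr hj
  · simp [hk]

lemma mem_comps {γ : Fin r → Fin d → ℕ} :
    γ ∈ comps d r α ↔ ∑ i, γ i = α ∧ ∀ i, γ i ≠ 0 := by
  simp only [comps, mem_filter, Fintype.mem_piFinset, mem_Iic, and_iff_right_iff_imp]
  rintro ⟨rfl, -⟩ i
  exact single_le_sum (fun k _ => zero_le) (mem_univ i)

lemma comps_one (hα : α ≠ 0) : comps d 1 α = {fun _ => α} := by
  ext γ
  rw [mem_comps, mem_singleton, Fin.sum_univ_one]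
  constructor
  · rintro ⟨rfl, -⟩
    exact funext fun i => by rw [Subsingleton.elim i 0]
  · rintro rfl
    exact ⟨rfl, fun _ => hα⟩

lemma snoc_mem_comps {γ : Fin r → Fin d → ℕ} {β : Fin d → ℕ} (hγ : γ ∈ comps d r α)
    (hβ : β ≠ 0) : Fin.snoc γ β ∈ comps d (r + 1) (α + β) := by
  rw [mem_comps] at hγ ⊢
  refine ⟨by simp [Fin.sum_univ_castSucc, hγ.1], Fin.lastCases ?_ fun i => ?_⟩
  · simpa using hβ
  · simpa using hγ.2 i

lemma exists_mem_comps_forall_sum_eq_one (α : Fin d → ℕ) :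
    ∃ γ ∈ comps d (∑ j, α j) α, ∀ i, ∑ j, γ i j = 1 := by
  induction hn : ∑ j, α j generalizing α with
  | zero =>
    obtain rfl : α = 0 := (Fintype.sum_eq_zero_iff_of_nonneg zero_le).mp hn
    exact ⟨Fin.elim0, mem_comps.mpr ⟨by simp, fun i => i.elim0⟩, fun i => i.elim0⟩
  | succ n ih =>
    obtain ⟨α', j, rfl⟩ := exists_eq_add_single (α := α) (by rintro rfl; simp at hn)
    have hα' : ∑ k, α' k = n := by simpa [sum_add_distrib] using hn
    obtain ⟨γ, hγ, hγ1⟩ := ih α' hα'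
    refine ⟨Fin.snoc γ (Pi.single j 1), snoc_mem_comps hγ (by simp), Fin.lastCases ?_ ?_⟩
    · simp
    · simpa using hγ1

lemma sum_lt_of_mem_comps {γ : Fin r → Fin d → ℕ} (hr : 2 ≤ r) (hγ : γ ∈ comps d r α)
    (i : Fin r) : ∑ j, γ i j < ∑ j, α j := by
  rw [mem_comps] at hγ
  obtain ⟨i', hi'⟩ := Fintype.exists_ne_of_one_lt_card (by rw [Fintype.card_fin]; exact hr) i
  have hle := add_le_sum (f := fun i => ∑ j, γ i j) (fun _ _ => zero_le)
    (mem_univ i) (mem_univ i') hi'.symm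
  rw [← hγ.1, sum_sum_apply]
  exact lt_of_lt_of_le (Nat.lt_add_of_pos_right (Fintype.sum_pos (pos_iff_ne_zero.mpr (hγ.2 i')))) hle

end Compositions

lemma sum_choose_mul_sum_prod_pos {d : ℕ} (p : ℕ) {b : (Fin d → ℕ) → ℝ} (hb0 : ∀ γ, 0 ≤ b γ)
    (hb1 : ∀ γ, ∑ j, γ j = 1 → b γ = 1) {α : Fin d → ℕ} (hα : 2 ≤ ∑ j, α j) :
    0 < ∑ r ∈ Icc 2 (∑ j, α j),
      (Nat.choose (r + p - 1) (p - 1) : ℝ) * ∑ γ ∈ comps d r α, ∏ i, b (γ i) := by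
  have hterm_nonneg : ∀ r, 0 ≤ (Nat.choose (r + p - 1) (p - 1) : ℝ) *
      ∑ γ ∈ comps d r α, ∏ i, b (γ i) := fun r =>
    mul_nonneg (Nat.cast_nonneg _) (sum_nonneg fun γ _ => prod_nonneg fun i _ => hb0 _)
  refine sum_pos' (fun r _ => hterm_nonneg r) ⟨_, mem_Icc.mpr ⟨hα, le_rfl⟩, ?_⟩
  obtain ⟨γ, hγ, hγ1⟩ := exists_mem_comps_forall_sum_eq_one α
  refine mul_pos (by exact_mod_cast Nat.choose_pos (by omega)) (sum_pos' ?_ ⟨γ, hγ, ?_⟩)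
  · exact fun γ _ => prod_nonneg fun i _ => hb0 _
  · simp [prod_eq_one fun i _ => hb1 _ (hγ1 i)]

lemma eq_prod_pow_of_sum_lt_two {d : ℕ} {μ : (Fin d → ℕ) → ℂ} (hμ0 : μ 0 = 1)
    {α : Fin d → ℕ} (hα : ∑ j, α j < 2) : μ α = ∏ j, μ (Pi.single j 1) ^ α j := by
  rcases eq_or_ne α 0 with rfl | hα0
  · simp [hμ0]
  obtain ⟨α', j, rfl⟩ := exists_eq_add_single hα0
  obtain rfl : α' = 0 := by
    simp only [Pi.add_apply, sum_add_distrib, sum_pi_single', mem_univ, ↓reduceIte] at hα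
    exact (Fintype.sum_eq_zero_iff_of_nonneg zero_le).mp (by omega)
  simp [Pi.single_apply]

lemma eq_of_sum_choose_mul_sum_eq {d : ℕ} (p : ℕ) {b : (Fin d → ℕ) → ℝ} (hb0 : ∀ γ, 0 ≤ b γ)
    (hb1 : ∀ γ, ∑ j, γ j = 1 → b γ = 1) {μ : (Fin d → ℕ) → ℂ} {α : Fin d → ℕ} {m : ℂ}
    (hα : 2 ≤ ∑ j, α j)
    (hbal : ∑ r ∈ Icc 1 (∑ j, α j), (Nat.choose (r + p - 1) (p - 1) : ℂ) *
          ∑ γ ∈ comps d r α, (∏ i, (b (γ i) : ℂ)) * ∏ i, μ (γ i)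
        = (∑ r ∈ Icc 1 (∑ j, α j), (Nat.choose (r + p - 1) (p - 1) : ℂ) *
          ∑ γ ∈ comps d r α, ∏ i, (b (γ i) : ℂ)) * μ α)
    (hparts : ∀ r, 2 ≤ r → ∀ γ ∈ comps d r α, ∏ i, μ (γ i) = m) :
    μ α = m := by
  have hα0 : α ≠ 0 := by rintro rfl; simp at hα
  set T : ℂ := ∑ r ∈ Icc 2 (∑ j, α j), (Nat.choose (r + p - 1) (p - 1) : ℂ) *
    ∑ γ ∈ comps d r α, ∏ i, (b (γ i) : ℂ)
  have hT : T ≠ 0 := by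
    simp only [T]
    exact_mod_cast (sum_choose_mul_sum_prod_pos p hb0 hb1 hα).ne'
  have hrest : ∑ r ∈ Icc 2 (∑ j, α j), (Nat.choose (r + p - 1) (p - 1) : ℂ) *
      ∑ γ ∈ comps d r α, (∏ i, (b (γ i) : ℂ)) * ∏ i, μ (γ i) = T * m := by
    rw [sum_mul]
    refine sum_congr rfl fun r hr => ?_
    rw [mul_assoc, sum_mul]
    exact congrArg _ (sum_congr rfl fun γ hγ => by rw [hparts r (mem_Icc.mp hr).1 γ hγ])
  rw [← insert_Icc_add_one_left_eq_Icc (by omega : 1 ≤ ∑ j, α j), sum_insert (by simp),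
    sum_insert (by simp), comps_one hα0] at hbal
  simp only [Nat.reduceAdd, sum_singleton, Fin.prod_univ_one, hrest] at hbal
  exact mul_left_cancel₀ hT (by linear_combination -hbal)

theorem stmt3_general (d p : ℕ)
    (b : (Fin d → ℕ) → ℝ) (hb0 : ∀ γ, 0 ≤ b γ) (hb1 : ∀ γ, (∑ j, γ j) = 1 → b γ = 1)
    (μ : (Fin d → ℕ) → ℂ) (hμ0 : μ 0 = 1)
    (h : ∀ α : Fin d → ℕ, α ≠ 0 →
      (∑ r ∈ Finset.Icc 1 (∑ j, α j), (Nat.choose (r + p - 1) (p - 1) : ℂ) *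
          ∑ γ ∈ comps d r α, (∏ i, (b (γ i) : ℂ)) * ∏ i, μ (γ i))
        = (∑ r ∈ Finset.Icc 1 (∑ j, α j), (Nat.choose (r + p - 1) (p - 1) : ℂ) *
          ∑ γ ∈ comps d r α, ∏ i, (b (γ i) : ℂ)) * μ α) :
    ∀ α : Fin d → ℕ, μ α = ∏ j, μ (Pi.single j 1) ^ α j := by
  intro α
  induction hn : ∑ j, α j using Nat.strong_induction_on generalizing α with
  | _ n IH =>
  rcases lt_or_ge n 2 with hn2 | hn2
  · exact eq_prod_pow_of_sum_lt_two hμ0 (hn ▸ hn2)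
  have hα0 : α ≠ 0 := by rintro rfl; simp only [Pi.zero_apply, sum_const_zero] at hn; omega
  refine eq_of_sum_choose_mul_sum_eq p hb0 hb1 (hn ▸ hn2) (h α hα0) fun r hr γ hγ => ?_
  rw [← (mem_comps.mp hγ).1, prod_pow_sum_apply]
  exact prod_congr rfl fun i _ => IH _ (hn ▸ sum_lt_of_mem_comps hr hγ i) _ rfl

/-- the key combinatorial claim for powers of CNP kernels.  If `μ : ℤ₊^d → ℂ`
with `μ(0) = 1` satisfies, for every nonzero multi-index `α`,
`Σ_{r=1}^{|α|} C(r+p-1,p-1) Σ_{γ₁+⋯+γ_r = α, γ_i ≠ 0} (Π b_{γ_i})(Π μ(γ_i))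
  = (Σ_{r=1}^{|α|} C(r+p-1,p-1) Σ_{γ₁+⋯+γ_r = α, γ_i ≠ 0} Π b_{γ_i}) · μ(α)`,
where `b ≥ 0` and `b_γ = 1` for `|γ| = 1`, then `μ(α) = Π_j μ(e_j)^{α_j}` for all `α`. -/
theorem stmt3 (d p : ℕ) (hd : 0 < d) (hp : 0 < p)
    (b : (Fin d → ℕ) → ℝ) (hb0 : ∀ γ, 0 ≤ b γ) (hb1 : ∀ γ, (∑ j, γ j) = 1 → b γ = 1)
    (μ : (Fin d → ℕ) → ℂ) (hμ0 : μ 0 = 1)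
    (h : ∀ α : Fin d → ℕ, α ≠ 0 →
      (∑ r ∈ Finset.Icc 1 (∑ j, α j), (Nat.choose (r + p - 1) (p - 1) : ℂ) *
          ∑ γ ∈ comps d r α, (∏ i, (b (γ i) : ℂ)) * ∏ i, μ (γ i))
        = (∑ r ∈ Finset.Icc 1 (∑ j, α j), (Nat.choose (r + p - 1) (p - 1) : ℂ) *
          ∑ γ ∈ comps d r α, ∏ i, (b (γ i) : ℂ)) * μ α) :
    ∀ α : Fin d → ℕ, μ α = ∏ j, μ (Pi.single j 1) ^ α j :=
  stmt3_general d p b hb0 hb1 μ hμ0 h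
end
end

section
/- Let b : 𝔹_d → 𝔻 be a holomorphic, injective map with b(z₀) = 0 for some z₀ ∈ 𝔹_d, let k(z,w) = (1 − b(z)\overline{b(w)})^{-1}, and suppose there are ξ₀ ∈ ∂𝔹_d and λ ∈ 𝔻 such that b(z) → λ as z → ξ₀ within 𝔹_d. Then the function g(z) = (1 − \overline{λ} b(z))^{-1} belongs to H(k) with ‖g‖² = (1 − |λ|²)^{-1}, one has ‖k_w − g‖_{H(k)} → 0 as w → ξ₀ within 𝔹_d, and consequently for every f ∈ H(k) the limit lim_{z→ξ₀} f(z) exists and equals ⟨f, g⟩_{H(k)}. -/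
/-!
The Gram function `⟪k_z, k_w⟫ = (1 - b(z) conj (b(w)))⁻¹` tends to `(1 - |λ|²)⁻¹` as `z` and `w`
tend to `ξ₀` jointly, so `‖k_z - k_w‖² = k(z,z) - k(z,w) - k(w,z) + k(w,w) → 0`: the kernel
functions form a Cauchy net and converge to some `g`. Passing to the limit in
`⟪k_z, k_w⟫` identifies `⟪k_z, g⟫ = g(z)` and `‖g‖²`, and `f(z) = ⟪k_z, f⟫ → ⟪g, f⟫`.
-/

open scoped BigOperators ComplexConjugate

noncomputable section

open Filter Topology

section GramLimit

variable {𝕜 H X : Type*} [RCLike 𝕜] [NormedAddCommGroup H] [InnerProductSpace 𝕜 H]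
  {l : Filter X} {u : X → H} {c : 𝕜}

theorem tendsto_sub_of_tendsto_inner
    (h : Tendsto (fun p : X × X => inner 𝕜 (u p.1) (u p.2)) (l ×ˢ l) (𝓝 c)) :
    Tendsto (fun p : X × X => u p.1 - u p.2) (l ×ˢ l) (𝓝 0) := by
  have hfst : Tendsto (fun p : X × X => (p.1, p.1)) (l ×ˢ l) (l ×ˢ l) :=
    tendsto_fst.prodMk tendsto_fst
  have hsnd : Tendsto (fun p : X × X => (p.2, p.2)) (l ×ˢ l) (l ×ˢ l) :=
    tendsto_snd.prodMk tendsto_snd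
  have hswap : Tendsto (fun p : X × X => (p.2, p.1)) (l ×ˢ l) (l ×ˢ l) :=
    tendsto_snd.prodMk tendsto_fst
  have hinner : Tendsto (fun p : X × X => inner 𝕜 (u p.1 - u p.2) (u p.1 - u p.2))
      (l ×ˢ l) (𝓝 0) := by
    simp_rw [inner_sub_sub_self]
    simpa using (((h.comp hfst).sub h).sub (h.comp hswap)).add (h.comp hsnd)
  have hnorm_sq : Tendsto (fun p : X × X => ‖u p.1 - u p.2‖ ^ 2) (l ×ˢ l) (𝓝 0) := by
    simpa only [Function.comp_def, inner_self_eq_norm_sq, map_zero] using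
      (RCLike.continuous_re.tendsto 0).comp hinner
  rw [tendsto_zero_iff_norm_tendsto_zero]
  simpa only [Real.sqrt_sq (norm_nonneg _), Real.sqrt_zero] using hnorm_sq.sqrt

theorem exists_tendsto_of_tendsto_inner [CompleteSpace H] [l.NeBot]
    (h : Tendsto (fun p : X × X => inner 𝕜 (u p.1) (u p.2)) (l ×ˢ l) (𝓝 c)) :
    ∃ g, Tendsto u l (𝓝 g) :=
  CompleteSpace.complete <|
    (IsUniformAddGroup.cauchy_map_iff_tendsto l u).2 ⟨‹_›, tendsto_sub_of_tendsto_inner h⟩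

end GramLimit

theorem one_sub_mul_conj_ne_zero {a c : ℂ} (ha : ‖a‖ < 1) (hc : ‖c‖ < 1) :
    1 - a * conj c ≠ 0 := by
  refine sub_ne_zero.2 fun h => ?_
  have : ‖a * conj c‖ < 1 := by
    rw [norm_mul, Complex.norm_conj]
    nlinarith [norm_nonneg a, norm_nonneg c]
  simp [← h] at this

theorem Filter.Tendsto.one_sub_mul_conj_inv {X : Type*} {l : Filter X} {φ ψ : X → ℂ} {a c : ℂ}
    (hφ : Tendsto φ l (𝓝 a)) (hψ : Tendsto ψ l (𝓝 c)) (h : 1 - a * conj c ≠ 0) :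
    Tendsto (fun x => (1 - φ x * conj (ψ x))⁻¹) l (𝓝 (1 - a * conj c)⁻¹) :=
  (tendsto_const_nhds.sub (hφ.mul ((Complex.continuous_conj.tendsto c).comp hψ))).inv₀ h

section OneSubMulConjKernel

variable {H X : Type*} [NormedAddCommGroup H] [InnerProductSpace ℂ H] [CompleteSpace H]
  {l : Filter X} [l.NeBot] {φ : X → ℂ} {lam : ℂ} {k : X → H}

theorem exists_tendsto_of_inner_eq_one_sub_mul_conj_inv (hφ : ∀ x, ‖φ x‖ < 1)
    (hlam : ‖lam‖ < 1) (hφlim : Tendsto φ l (𝓝 lam))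
    (hk : ∀ z w, inner ℂ (k z) (k w) = (1 - φ z * conj (φ w))⁻¹) :
    ∃ g, Tendsto k l (𝓝 g) ∧ (∀ z, inner ℂ (k z) g = (1 - φ z * conj lam)⁻¹) ∧
      inner ℂ g g = (1 - lam * conj lam)⁻¹ := by
  have hgram : Tendsto (fun p : X × X => inner ℂ (k p.1) (k p.2)) (l ×ˢ l)
      (𝓝 (1 - lam * conj lam)⁻¹) := by
    simpa only [hk, Function.comp_def] using ((hφlim.comp tendsto_fst).one_sub_mul_conj_inv
      (hφlim.comp tendsto_snd) (one_sub_mul_conj_ne_zero hlam hlam))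
  obtain ⟨g, hg⟩ := exists_tendsto_of_tendsto_inner hgram
  have hkg : ∀ z, inner ℂ (k z) g = (1 - φ z * conj lam)⁻¹ := fun z =>
    tendsto_nhds_unique (tendsto_const_nhds.inner hg) <| by
      simpa only [hk] using (tendsto_const_nhds.one_sub_mul_conj_inv hφlim
        (one_sub_mul_conj_ne_zero (hφ z) hlam))
  refine ⟨g, hg, hkg, tendsto_nhds_unique (hg.inner tendsto_const_nhds) ?_⟩
  simpa only [hkg] using (hφlim.one_sub_mul_conj_inv tendsto_const_nhds
    (one_sub_mul_conj_ne_zero hlam hlam))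

end OneSubMulConjKernel

theorem neBot_comap_val_nhdsWithin {E : Type*} [TopologicalSpace E] {s : Set E} {x : E}
    (hx : x ∈ closure s) : (comap ((↑) : s → E) (𝓝[s] x)).NeBot := by
  rw [nhdsWithin, comap_inf, comap_principal, Subtype.coe_preimage_self, principal_univ,
    inf_top_eq]
  exact mem_closure_iff_comap_neBot.1 hx

theorem mem_closure_ball_of_norm_eq_one {d : ℕ} {ξ : EuclideanSpace ℂ (Fin d)} (hξ : ‖ξ‖ = 1) :
    ξ ∈ closure (Ball d) := by
  rw [Ball, closure_ball _ one_ne_zero, mem_closedBall_zero_iff, hξ]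

theorem stmt14_general (d : ℕ)
    (b : EuclideanSpace ℂ (Fin d) → ℂ)
    (hb_into : ∀ z ∈ Ball d, ‖b z‖ < 1)
    (ξ₀ : EuclideanSpace ℂ (Fin d)) (hξ₀ : ‖ξ₀‖ = 1)
    (lam : ℂ) (hlam : ‖lam‖ < 1)
    (hblim : Filter.Tendsto b (nhdsWithin ξ₀ (Ball d)) (nhds lam))
    {H : Type} [NormedAddCommGroup H] [InnerProductSpace ℂ H] [CompleteSpace H]
    (J : H →ₗ[ℂ] (Ball d → ℂ))
    (kf : Ball d → H)
    (hkf : ∀ w : Ball d, J (kf w) = fun z : Ball d => (1 - b z.1 * conj (b w.1))⁻¹)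
    (hrep : ∀ (f : H) (w : Ball d), J f w = inner ℂ (kf w) f) :
    ∃ g : H,
      (J g = fun z : Ball d => (1 - conj lam * b z.1)⁻¹) ∧
      ‖g‖ ^ 2 = ((1 : ℝ) - ‖lam‖ ^ 2)⁻¹ ∧
      Filter.Tendsto (fun w : Ball d => ‖kf w - g‖)
        (Filter.comap Subtype.val (nhdsWithin ξ₀ (Ball d))) (nhds 0) ∧
      ∀ f : H, Filter.Tendsto (fun z : Ball d => J f z)
        (Filter.comap Subtype.val (nhdsWithin ξ₀ (Ball d))) (nhds (inner ℂ g f : ℂ)) := by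
  have := neBot_comap_val_nhdsWithin (mem_closure_ball_of_norm_eq_one hξ₀)
  obtain ⟨g, hlim, hkg, hgg⟩ := exists_tendsto_of_inner_eq_one_sub_mul_conj_inv
    (φ := fun z : Ball d => b z) (fun z => hb_into z z.2) hlam (hblim.comp tendsto_comap)
    (fun z w => by rw [← hrep, hkf])
  refine ⟨g, funext fun z => ?_, ?_, tendsto_iff_norm_sub_tendsto_zero.1 hlim, fun f => ?_⟩
  · rw [hrep, hkg, mul_comm]
  · rw [← inner_self_eq_norm_sq (𝕜 := ℂ), hgg, Complex.mul_conj']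
    norm_cast
  · simpa only [hrep] using hlim.inner tendsto_const_nhds

/-- let `b : 𝔹_d → 𝔻` be holomorphic, injective, vanishing at some
`z₀ ∈ 𝔹_d`, with boundary limit `b(z) → λ` as `z → ξ₀ ∈ ∂𝔹_d` within the ball, and let
`k(z,w) = (1 - b(z) conj (b(w)))⁻¹`.  Then `g(z) = (1 - conj λ · b(z))⁻¹` belongs to `H(k)`
with `‖g‖² = (1 - |λ|²)⁻¹`, the kernel functions `k_w` converge to `g` in norm as `w → ξ₀`,
and every `f ∈ H(k)` has a limit at `ξ₀` equal to `⟨f, g⟩`. -/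
theorem stmt14 (d : ℕ) (hd : 0 < d)
    (b : EuclideanSpace ℂ (Fin d) → ℂ)
    (hb_hol : DifferentiableOn ℂ b (Ball d))
    (hb_into : ∀ z ∈ Ball d, ‖b z‖ < 1)
    (hb_inj : Set.InjOn b (Ball d))
    (z₀ : EuclideanSpace ℂ (Fin d)) (hz₀ : z₀ ∈ Ball d) (hbz₀ : b z₀ = 0)
    (ξ₀ : EuclideanSpace ℂ (Fin d)) (hξ₀ : ‖ξ₀‖ = 1)
    (lam : ℂ) (hlam : ‖lam‖ < 1)
    (hblim : Filter.Tendsto b (nhdsWithin ξ₀ (Ball d)) (nhds lam))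
    {H : Type} [NormedAddCommGroup H] [InnerProductSpace ℂ H] [CompleteSpace H]
    (J : H →ₗ[ℂ] (Ball d → ℂ)) (hJ : Function.Injective J)
    (kf : Ball d → H)
    (hkf : ∀ w : Ball d, J (kf w) = fun z : Ball d => (1 - b z.1 * conj (b w.1))⁻¹)
    (hrep : ∀ (f : H) (w : Ball d), J f w = inner ℂ (kf w) f) :
    ∃ g : H,
      (J g = fun z : Ball d => (1 - conj lam * b z.1)⁻¹) ∧
      ‖g‖ ^ 2 = ((1 : ℝ) - ‖lam‖ ^ 2)⁻¹ ∧
      Filter.Tendsto (fun w : Ball d => ‖kf w - g‖)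
        (Filter.comap Subtype.val (nhdsWithin ξ₀ (Ball d))) (nhds 0) ∧
      ∀ f : H, Filter.Tendsto (fun z : Ball d => J f z)
        (Filter.comap Subtype.val (nhdsWithin ξ₀ (Ball d))) (nhds (inner ℂ g f : ℂ)) :=
  stmt14_general d b hb_into ξ₀ hξ₀ lam hlam hblim J kf hkf hrep
end
end

section
/- Let b : 𝔹_d → 𝔻 be a holomorphic, injective map with b(z₀) = 0 for some z₀ ∈ 𝔹_d, let k(z,w) = (1 − b(z)\overline{b(w)})^{-1}, and suppose there are ξ₀ ∈ ∂𝔹_d and λ ∈ 𝔻 such that b(z) → λ as z → ξ₀ within 𝔹_d. Then Λ(f) := lim_{z→ξ₀} f(z) defines a bounded linear functional on H(k) with Λ(1) = 1 which is multiplicative (Λ(fg) = Λ(f)Λ(g) whenever f, g and fg all belong to H(k)); moreover, for every w ∈ 𝔹_d the function 1/k_w(z) = 1 − b(z)\overline{b(w)} belongs to H(k) and Λ(1/k_w) · Λ(k_w) = 1. -/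
open scoped BigOperators ComplexConjugate

noncomputable section

/-- `J` realizes the RKHS `H` as a space of functions on `X`. -/
def IsMultiplicative {X H : Type} [NormedAddCommGroup H] [InnerProductSpace ℂ H]
    (J : H →ₗ[ℂ] (X → ℂ)) (Λ : H →L[ℂ] ℂ) : Prop :=
  ∀ f g h : H, J h = J f * J g → Λ h = Λ f * Λ g

/-!
The kernel functions `k_z` converge in `H(k)` as `z → ξ₀`: the Gram entries
`⟪k_z, k_w⟫ = (1 - b(z) conj b(w))⁻¹` tend to `(1 - |λ|²)⁻¹` jointly in `(z, w)`, which forces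
`‖k_z - k_w‖² → 0`. Hence `Λ = ⟪K, ·⟫` for the limit `K`, and multiplicativity is the product rule
for limits. In the same way `(conj b(w))⁻¹ (k_w - k_{z₀})` converges as `w → z₀` (where
`b(w) ≠ 0` by injectivity) to an element of `H(k)` whose values are `b`. So
`1 - b · conj b(w) = k_{z₀} - conj b(w) · b` lies in `H(k)`, and `Λ` sends it to
`1 - λ conj b(w)`, the reciprocal of `Λ(k_w) = (1 - λ conj b(w))⁻¹`.
-/

open Filter Topology
open scoped InnerProductSpace

theorem one_sub_mul_ne_zero_of_norm_lt {x y : ℂ} (hx : ‖x‖ < 1) (hy : ‖y‖ ≤ 1) :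
    1 - x * y ≠ 0 := by
  rw [sub_ne_zero]
  intro h
  have : ‖x * y‖ < 1 := by
    rw [norm_mul]; nlinarith [norm_nonneg x, norm_nonneg y]
  simp [← h] at this

theorem inv_one_sub_sub_one {K : Type*} [Field K] {x : K} (h : 1 - x ≠ 0) :
    (1 - x)⁻¹ - 1 = x * (1 - x)⁻¹ := by
  field_simp
  ring

section InnerProductSpace

variable {𝕜 E α : Type*} [RCLike 𝕜] [NormedAddCommGroup E] [InnerProductSpace 𝕜 E]

theorem cauchy_map_of_tendsto_inner {φ : α → E} {L : Filter α} [L.NeBot] {c : 𝕜}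
    (h : Tendsto (fun p : α × α => ⟪φ p.1, φ p.2⟫_𝕜) (L ×ˢ L) (𝓝 c)) :
    Cauchy (map φ L) := by
  have diag (f g : α × α → α) (hf : Tendsto f (L ×ˢ L) L) (hg : Tendsto g (L ×ˢ L) L) :
      Tendsto (fun p => ⟪φ (f p), φ (g p)⟫_𝕜) (L ×ˢ L) (𝓝 c) :=
    h.comp (hf.prodMk hg)
  have hsq : Tendsto (fun p : α × α => ‖φ p.1 - φ p.2‖ ^ 2) (L ×ˢ L) (𝓝 0) := by
    have := (RCLike.continuous_re.tendsto _).comp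
      (((diag _ _ tendsto_fst tendsto_fst).sub (diag _ _ tendsto_fst tendsto_snd)).sub
        ((diag _ _ tendsto_snd tendsto_fst).sub (diag _ _ tendsto_snd tendsto_snd)))
    simp only [sub_self, map_zero] at this
    refine this.congr fun p => ?_
    rw [← inner_self_eq_norm_sq (𝕜 := 𝕜), inner_sub_left, inner_sub_right, inner_sub_right]
    simp only [Function.comp_apply]
  rw [cauchy_map_iff, tendsto_uniformity_iff_dist_tendsto_zero]
  refine ⟨‹_›, ?_⟩
  simpa [dist_eq_norm, Real.sqrt_sq (norm_nonneg _)] using hsq.sqrt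

theorem exists_tendsto_of_tendsto_inner_s15 [CompleteSpace E] {φ : α → E} {L : Filter α} [L.NeBot]
    {c : 𝕜} (h : Tendsto (fun p : α × α => ⟪φ p.1, φ p.2⟫_𝕜) (L ×ˢ L) (𝓝 c)) :
    ∃ K, Tendsto φ L (𝓝 K) :=
  CompleteSpace.complete (cauchy_map_of_tendsto_inner h)

end InnerProductSpace

section Kernel

variable {X H : Type*} [NormedAddCommGroup H] [InnerProductSpace ℂ H] {b : X → ℂ}

theorem tendsto_inv_one_sub_mul_conj {L : Filter X} {μ : ℂ} (hμ : ‖μ‖ < 1)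
    (hb : Tendsto b L (𝓝 μ)) :
    Tendsto (fun p : X × X => (1 - b p.1 * conj (b p.2))⁻¹) (L ×ˢ L) (𝓝 (1 - μ * conj μ)⁻¹) :=
  (tendsto_const_nhds.sub ((hb.comp tendsto_fst).mul
    ((Complex.continuous_conj.tendsto μ).comp (hb.comp tendsto_snd)))).inv₀
    (one_sub_mul_ne_zero_of_norm_lt hμ (by simpa using hμ.le))

variable {kf : X → H} (hk : ∀ x y, ⟪kf x, kf y⟫_ℂ = (1 - b x * conj (b y))⁻¹)
include hk

theorem exists_tendsto_kernel_of_tendsto [CompleteSpace H] {L : Filter X} [L.NeBot] {μ : ℂ}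
    (hμ : ‖μ‖ < 1) (hb : Tendsto b L (𝓝 μ)) : ∃ K, Tendsto kf L (𝓝 K) :=
  exists_tendsto_of_tendsto_inner_s15 <|
    (tendsto_inv_one_sub_mul_conj hμ hb).congr fun p => (hk p.1 p.2).symm

theorem inner_kernel_smul_sub_kernel {x₀ : X} (hx₀ : b x₀ = 0) {z w : X} (hz : ‖b z‖ < 1)
    (hw : ‖b w‖ ≤ 1) (hw₀ : b w ≠ 0) :
    ⟪kf z, (conj (b w))⁻¹ • (kf w - kf x₀)⟫_ℂ = b z * (1 - b z * conj (b w))⁻¹ := by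
  have hne : 1 - b z * conj (b w) ≠ 0 :=
    one_sub_mul_ne_zero_of_norm_lt hz (by rwa [Complex.norm_conj])
  have hw₀' : conj (b w) ≠ 0 := by simpa using hw₀
  rw [inner_smul_right, inner_sub_right, hk, hk, hx₀, map_zero, mul_zero, sub_zero, inv_one,
    inv_one_sub_sub_one hne, mul_comm (b z), mul_assoc, inv_mul_cancel_left₀ hw₀']

theorem exists_inner_kernel_eq (hb : ∀ x, ‖b x‖ < 1) [CompleteSpace H] {x₀ : X} (hx₀ : b x₀ = 0)
    {L : Filter X} [L.NeBot] (hbL : Tendsto b L (𝓝[≠] 0)) :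
    ∃ β : H, ∀ z, ⟪kf z, β⟫_ℂ = b z := by
  set u : X → H := fun w => (conj (b w))⁻¹ • (kf w - kf x₀)
  obtain ⟨hb0, hbne⟩ := tendsto_nhdsWithin_iff.1 hbL
  have hu (z : X) {w : X} (hw : b w ≠ 0) :
      ⟪kf z, u w⟫_ℂ = b z * (1 - b z * conj (b w))⁻¹ :=
    inner_kernel_smul_sub_kernel hk hx₀ (hb z) (hb w).le hw
  have huu : ∀ᶠ p in L ×ˢ L, ⟪u p.1, u p.2⟫_ℂ = (1 - b p.1 * conj (b p.2))⁻¹ := by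
    filter_upwards [tendsto_fst.eventually hbne, tendsto_snd.eventually hbne] with p h1 h2
    rw [inner_smul_left, inner_sub_left, hu _ h2, hu _ h2, hx₀, zero_mul, sub_zero, map_inv₀,
      Complex.conj_conj, inv_mul_cancel_left₀ h1]
  obtain ⟨β, hβ⟩ := exists_tendsto_of_tendsto_inner_s15 <|
    (tendsto_inv_one_sub_mul_conj (by simp) hb0).congr' (huu.mono fun p hp => hp.symm)
  refine ⟨β, fun z => tendsto_nhds_unique (tendsto_const_nhds.inner hβ) ?_⟩
  refine Tendsto.congr' (hbne.mono fun w hw => (hu z hw).symm) ?_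
  have hden := (tendsto_const_nhds (x := (1 : ℂ))).sub
    ((tendsto_const_nhds (x := b z)).mul ((Complex.continuous_conj.tendsto 0).comp hb0))
  simpa using tendsto_const_nhds.mul (hden.inv₀ (by simp))

theorem inner_kernel_sub_smul {x₀ : X} (hx₀ : b x₀ = 0) {β : H} (hβ : ∀ z, ⟪kf z, β⟫_ℂ = b z)
    (c : ℂ) (z : X) : ⟪kf z, kf x₀ - c • β⟫_ℂ = 1 - b z * c := by
  rw [inner_sub_right, inner_smul_right, hk, hβ, hx₀, map_zero, mul_zero, sub_zero, inv_one,
    mul_comm]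

theorem inner_sub_smul_mul_inner_kernel_eq_one {x₀ : X} (hx₀ : b x₀ = 0) {β : H}
    (hβ : ∀ z, ⟪kf z, β⟫_ℂ = b z) {L : Filter X} [L.NeBot] {μ : ℂ} (hμ : ‖μ‖ < 1)
    (hbL : Tendsto b L (𝓝 μ)) {K : H} (hK : Tendsto kf L (𝓝 K)) {w : X} (hw : ‖b w‖ ≤ 1) :
    ⟪K, kf x₀ - conj (b w) • β⟫_ℂ * ⟪K, kf w⟫_ℂ = 1 := by
  have hne := one_sub_mul_ne_zero_of_norm_lt hμ (by rwa [Complex.norm_conj])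
  have hlim := tendsto_const_nhds (x := (1 : ℂ)) |>.sub
    (hbL.mul (tendsto_const_nhds (x := conj (b w))))
  have hg : ⟪K, kf x₀ - conj (b w) • β⟫_ℂ = 1 - μ * conj (b w) :=
    tendsto_nhds_unique (hK.inner tendsto_const_nhds)
      (hlim.congr fun z => (inner_kernel_sub_smul hk hx₀ hβ _ z).symm)
  have hkw : ⟪K, kf w⟫_ℂ = (1 - μ * conj (b w))⁻¹ :=
    tendsto_nhds_unique (hK.inner tendsto_const_nhds) ((hlim.inv₀ hne).congr fun z => (hk z w).symm)
  rw [hg, hkw, mul_inv_cancel₀ hne]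

end Kernel

theorem isMultiplicative_of_tendsto {X H : Type} [NormedAddCommGroup H] [InnerProductSpace ℂ H]
    {J : H →ₗ[ℂ] (X → ℂ)} {Λ : H →L[ℂ] ℂ} {L : Filter X} [L.NeBot]
    (h : ∀ f, Tendsto (J f) L (𝓝 (Λ f))) : IsMultiplicative J Λ :=
  fun f g k hk => tendsto_nhds_unique (h k) (hk ▸ (h f).mul (h g))

theorem neBot_comap_coe_nhdsWithin_of_mem_closure {X : Type*} [TopologicalSpace X] {s : Set X}
    {x : X} (hx : x ∈ closure s) : (comap ((↑) : s → X) (𝓝[s] x)).NeBot :=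
  have := mem_closure_iff_nhdsWithin_neBot.1 hx
  comap_coe_neBot_of_le_principal inf_le_right

theorem neBot_comap_coe_nhdsNE_of_mem_nhds {X : Type*} [TopologicalSpace X] {s : Set X} {x : X}
    [(𝓝[≠] x).NeBot] (hs : s ∈ 𝓝 x) : (comap ((↑) : s → X) (𝓝[≠] x)).NeBot :=
  NeBot.comap_of_range_mem ‹_› <| by rw [Subtype.range_coe]; exact mem_nhdsWithin_of_mem_nhds hs

theorem Set.InjOn.tendsto_comap_nhdsNE {X Y : Type*} [TopologicalSpace X] [TopologicalSpace Y]
    {f : X → Y} {s : Set X} {x : X} (hinj : InjOn f s) (hx : x ∈ s) (hf : ContinuousAt f x) :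
    Tendsto (fun z : s => f z) (comap (↑) (𝓝[≠] x)) (𝓝[≠] (f x)) :=
  tendsto_nhdsWithin_iff.2 ⟨(hf.tendsto.mono_left nhdsWithin_le_nhds).comp tendsto_comap,
    mem_of_superset (preimage_mem_comap self_mem_nhdsWithin) fun z hz h => hz (hinj z.2 hx h)⟩

theorem stmt15_general (d : ℕ) (hd : 0 < d)
    (b : EuclideanSpace ℂ (Fin d) → ℂ)
    (hb_hol : DifferentiableOn ℂ b (Ball d))
    (hb_into : ∀ z ∈ Ball d, ‖b z‖ < 1)
    (hb_inj : Set.InjOn b (Ball d))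
    (z₀ : EuclideanSpace ℂ (Fin d)) (hz₀ : z₀ ∈ Ball d) (hbz₀ : b z₀ = 0)
    (ξ₀ : EuclideanSpace ℂ (Fin d)) (hξ₀ : ‖ξ₀‖ = 1)
    (lam : ℂ) (hlam : ‖lam‖ < 1)
    (hblim : Filter.Tendsto b (nhdsWithin ξ₀ (Ball d)) (nhds lam))
    {H : Type} [NormedAddCommGroup H] [InnerProductSpace ℂ H] [CompleteSpace H]
    (J : H →ₗ[ℂ] (Ball d → ℂ))
    (kf : Ball d → H)
    (hkf : ∀ w : Ball d, J (kf w) = fun z : Ball d => (1 - b z.1 * conj (b w.1))⁻¹)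
    (hrep : ∀ (f : H) (w : Ball d), J f w = inner ℂ (kf w) f) :
    ∃ Λ : H →L[ℂ] ℂ,
      (∀ f : H, Filter.Tendsto (fun z : Ball d => J f z)
        (Filter.comap Subtype.val (nhdsWithin ξ₀ (Ball d))) (nhds (Λ f))) ∧
      (∀ one : H, (J one = fun _ : Ball d => 1) → Λ one = 1) ∧
      IsMultiplicative J Λ ∧
      (∀ w : Ball d, ∃ g : H,
        (J g = fun z : Ball d => 1 - b z.1 * conj (b w.1)) ∧ Λ g * Λ (kf w) = 1) := by
  have hk (x y : Ball d) : ⟪kf x, kf y⟫_ℂ = (1 - b x * conj (b y))⁻¹ := by rw [← hrep, hkf]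
  have hb_norm (z : Ball d) : ‖b z‖ < 1 := hb_into z z.2
  have : (comap Subtype.val (𝓝[Ball d] ξ₀)).NeBot :=
    neBot_comap_coe_nhdsWithin_of_mem_closure <| by
      rw [Ball, closure_ball _ one_ne_zero, mem_closedBall_zero_iff, hξ₀]
  have hbL : Tendsto (fun z : Ball d => b z) (comap Subtype.val (𝓝[Ball d] ξ₀)) (𝓝 lam) :=
    hblim.comp tendsto_comap
  obtain ⟨K, hK⟩ := exists_tendsto_kernel_of_tendsto hk hlam hbL
  have hΛ (f : H) : Tendsto (J f) (comap Subtype.val (𝓝[Ball d] ξ₀)) (𝓝 (innerSL ℂ K f)) :=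
    (hK.inner tendsto_const_nhds).congr fun z => (hrep f z).symm
  have hball : Ball d ∈ 𝓝 z₀ := Metric.isOpen_ball.mem_nhds hz₀
  have : NeZero d := ⟨hd.ne'⟩
  have := Module.punctured_nhds_neBot ℂ (EuclideanSpace ℂ (Fin d)) z₀
  have := neBot_comap_coe_nhdsNE_of_mem_nhds hball
  obtain ⟨β, hβ⟩ := exists_inner_kernel_eq hk hb_norm (x₀ := ⟨z₀, hz₀⟩) hbz₀ <| hbz₀ ▸
    hb_inj.tendsto_comap_nhdsNE hz₀ (hb_hol.differentiableAt hball).continuousAt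
  refine ⟨innerSL ℂ K, hΛ, fun one h1 => tendsto_nhds_unique (hΛ one) (h1 ▸ tendsto_const_nhds),
    isMultiplicative_of_tendsto hΛ, fun w => ⟨kf ⟨z₀, hz₀⟩ - conj (b w) • β,
      funext fun z => by rw [hrep, inner_kernel_sub_smul hk hbz₀ hβ],
      inner_sub_smul_mul_inner_kernel_eq_one hk hbz₀ hβ hlam hbL hK (hb_norm w).le⟩⟩

/-- let `b : 𝔹_d → 𝔻` be holomorphic, injective, vanishing at some
`z₀ ∈ 𝔹_d`, with boundary limit `b(z) → λ ∈ 𝔻` as `z → ξ₀ ∈ ∂𝔹_d` within the ball, and let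
`k(z,w) = (1 - b(z) conj (b(w)))⁻¹`.  Then `Λ(f) = lim_{z → ξ₀} f(z)` defines a bounded
linear functional on `H(k)` with `Λ(1) = 1` which is multiplicative; moreover, for every
`w ∈ 𝔹_d` the function `1/k_w(z) = 1 - b(z) conj (b(w))` belongs to `H(k)` and
`Λ(1/k_w) · Λ(k_w) = 1`. -/
theorem stmt15 (d : ℕ) (hd : 0 < d)
    (b : EuclideanSpace ℂ (Fin d) → ℂ)
    (hb_hol : DifferentiableOn ℂ b (Ball d))
    (hb_into : ∀ z ∈ Ball d, ‖b z‖ < 1)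
    (hb_inj : Set.InjOn b (Ball d))
    (z₀ : EuclideanSpace ℂ (Fin d)) (hz₀ : z₀ ∈ Ball d) (hbz₀ : b z₀ = 0)
    (ξ₀ : EuclideanSpace ℂ (Fin d)) (hξ₀ : ‖ξ₀‖ = 1)
    (lam : ℂ) (hlam : ‖lam‖ < 1)
    (hblim : Filter.Tendsto b (nhdsWithin ξ₀ (Ball d)) (nhds lam))
    {H : Type} [NormedAddCommGroup H] [InnerProductSpace ℂ H] [CompleteSpace H]
    (J : H →ₗ[ℂ] (Ball d → ℂ)) (hJ : Function.Injective J)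
    (kf : Ball d → H)
    (hkf : ∀ w : Ball d, J (kf w) = fun z : Ball d => (1 - b z.1 * conj (b w.1))⁻¹)
    (hrep : ∀ (f : H) (w : Ball d), J f w = inner ℂ (kf w) f) :
    ∃ Λ : H →L[ℂ] ℂ,
      (∀ f : H, Filter.Tendsto (fun z : Ball d => J f z)
        (Filter.comap Subtype.val (nhdsWithin ξ₀ (Ball d))) (nhds (Λ f))) ∧
      (∀ one : H, (J one = fun _ : Ball d => 1) → Λ one = 1) ∧
      IsMultiplicative J Λ ∧
      (∀ w : Ball d, ∃ g : H,
        (J g = fun z : Ball d => 1 - b z.1 * conj (b w.1)) ∧ Λ g * Λ (kf w) = 1) :=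
  stmt15_general d hd b hb_hol hb_into hb_inj z₀ hz₀ hbz₀ ξ₀ hξ₀ lam hlam hblim J kf hkf hrep
end
end
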